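/- arXiv:1307.6618 — 5 statements merged into one kernel-verified Lean document; each statement's English description precedes it below -/
import Mathlib

section
/- Let a > 4, let Q(X) = a·X²·(1 − X) − X, and let c₋ = 1/2 − √(1/4 − 1/a). If u : [0, ∞) → ℝ is differentiable with u'(t) = Q(u(t)) for all t ≥ 0 and u(0) ∈ (0, c₋), then u(t) → 0 as t → ∞. -/
/-!
On `(0, c₋)` the mean-field polynomial is negative: `Q(X) = X (a X (1 - X) - 1)` and
`a X (1 - X) < a c₋ (1 - c₋) = 1` there. Writing `κ = 1 - a u₀ (1 - u₀) > 0`, one has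
`-X < Q(X) ≤ -κ X` on `(0, u₀]`, so `u₀ e^{-t}` is a strict subsolution and `u₀ e^{-κ t / 2}`
a strict supersolution; both stay inside `(0, u₀]`, and a fencing argument traps `u` between them.
-/

open Set Filter Real Topology

theorem le_of_hasDerivAt_of_eq_imp_lt {f g f' g' : ℝ → ℝ}
    (hf : ∀ t, 0 ≤ t → HasDerivAt f (f' t) t) (hg : ∀ t, 0 ≤ t → HasDerivAt g (g' t) t)
    (h0 : f 0 ≤ g 0) (hlt : ∀ t, 0 ≤ t → f t = g t → f' t < g' t) {t : ℝ} (ht : 0 ≤ t) :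
    f t ≤ g t :=
  image_le_of_deriv_right_lt_deriv_boundary' (a := 0) (b := t)
    (fun x hx => (hf x hx.1).continuousAt.continuousWithinAt)
    (fun x hx => (hf x hx.1).hasDerivWithinAt) h0
    (fun x hx => (hg x hx.1).continuousAt.continuousWithinAt)
    (fun x hx => (hg x hx.1).hasDerivWithinAt) (fun x hx => hlt x hx.1) ⟨ht, le_rfl⟩

theorem hasDerivAt_const_mul_exp_mul (c k t : ℝ) :
    HasDerivAt (fun s => c * exp (k * s)) (k * (c * exp (k * t))) t := by
  have := ((hasDerivAt_id t).const_mul k).exp.const_mul c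
  simp only [id, mul_one] at this
  exact this.congr_deriv (by ring)

theorem mul_exp_mem_Ioc {c k t : ℝ} (hc : 0 < c) (hk : k ≤ 0) (ht : 0 ≤ t) :
    c * exp (k * t) ∈ Ioc 0 c :=
  ⟨by positivity,
    mul_le_of_le_one_right hc.le (exp_le_one_iff.mpr (mul_nonpos_of_nonpos_of_nonneg hk ht))⟩

theorem allee_threshold_spec {a : ℝ} (ha : 4 < a) :
    a * (1 / 2 - √(1 / 4 - 1 / a)) * (1 - (1 / 2 - √(1 / 4 - 1 / a))) = 1 ∧
      1 / 2 - √(1 / 4 - 1 / a) < 1 / 2 := by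
  have hpos : 0 < 1 / 4 - 1 / a := by
    have : 1 / a < 1 / 4 := one_div_lt_one_div_of_lt (by norm_num) ha
    linarith
  have hsq := sq_sqrt hpos.le
  refine ⟨?_, by linarith [sqrt_pos.mpr hpos]⟩
  have : a * (1 / 4 - 1 / a) = a / 4 - 1 := by field_simp
  linear_combination (-a) * hsq - this

theorem mul_mul_one_sub_lt_one {a x : ℝ} (ha : 4 < a) (hx : x < 1 / 2 - √(1 / 4 - 1 / a)) :
    a * x * (1 - x) < 1 := by
  obtain ⟨hc, hc_half⟩ := allee_threshold_spec ha
  set c := 1 / 2 - √(1 / 4 - 1 / a)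
  have : 0 < a * ((c - x) * (1 - c - x)) :=
    mul_pos (by linarith) (mul_pos (by linarith) (by linarith))
  linarith

theorem neg_lt_allee_poly {a y : ℝ} (ha : 0 < a) (hy0 : 0 < y) (hy1 : y < 1) :
    -y < a * y ^ 2 * (1 - y) - y := by
  have : 0 < a * y ^ 2 * (1 - y) := by have := sub_pos.mpr hy1; positivity
  linarith

theorem allee_poly_le_neg_mul {a x y : ℝ} (ha : 0 ≤ a) (hy : 0 ≤ y) (hyx : y ≤ x)
    (hx : x ≤ 1 / 2) : a * y ^ 2 * (1 - y) - y ≤ -(1 - a * x * (1 - x)) * y := by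
  have : 0 ≤ a * y * ((x - y) * (1 - x - y)) :=
    mul_nonneg (mul_nonneg ha hy) (mul_nonneg (by linarith) (by linarith))
  linarith

theorem stmt_1 (a : ℝ) (ha : 4 < a)
    (Q : ℝ → ℝ) (hQ : ∀ X, Q X = a * X ^ 2 * (1 - X) - X)
    (cm : ℝ) (hcm : cm = 1 / 2 - Real.sqrt (1 / 4 - 1 / a))
    (u : ℝ → ℝ)
    (hderiv : ∀ t : ℝ, 0 ≤ t → HasDerivAt u (Q (u t)) t)
    (h0 : u 0 ∈ Set.Ioo (0 : ℝ) cm) :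
    Filter.Tendsto u Filter.atTop (nhds 0) := by
  subst hcm
  obtain ⟨hu0, hu0c⟩ := h0
  have hu0_half : u 0 < 1 / 2 := hu0c.trans (allee_threshold_spec ha).2
  set κ := 1 - a * u 0 * (1 - u 0)
  have hκ : 0 < κ := sub_pos.mpr (mul_mul_one_sub_lt_one ha hu0c)
  have lower : ∀ t, 0 ≤ t → u 0 * exp (-1 * t) ≤ u t := fun t ht =>
    le_of_hasDerivAt_of_eq_imp_lt (fun s _ => hasDerivAt_const_mul_exp_mul _ _ s) hderiv
      (by simp) (fun s hs heq => by
        obtain ⟨hy0, hy⟩ := mul_exp_mem_Ioc hu0 (by norm_num : (-1 : ℝ) ≤ 0) hs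
        rw [heq] at hy0 hy
        rw [heq, hQ]
        linarith [neg_lt_allee_poly (by linarith : (0 : ℝ) < a) hy0 (by linarith : u s < 1)]) ht
  have upper : ∀ t, 0 ≤ t → u t ≤ u 0 * exp (-(κ / 2) * t) := fun t ht =>
    le_of_hasDerivAt_of_eq_imp_lt hderiv (fun s _ => hasDerivAt_const_mul_exp_mul _ _ s)
      (by simp) (fun s hs heq => by
        obtain ⟨hy0, hy⟩ := mul_exp_mem_Ioc hu0 (by linarith : -(κ / 2) ≤ 0) hs
        rw [← heq] at hy0 hy
        rw [← heq, hQ]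
        have : a * u s ^ 2 * (1 - u s) - u s ≤ -κ * u s :=
          allee_poly_le_neg_mul (by linarith) hy0.le hy hu0_half.le
        linarith [mul_pos hκ hy0]) ht
  have hdecay : Tendsto (fun t => u 0 * exp (-(κ / 2) * t)) atTop (𝓝 0) := by
    simpa using (tendsto_exp_atBot.comp
      (tendsto_id.const_mul_atTop_of_neg (by linarith : -(κ / 2) < 0))).const_mul (u 0)
  refine tendsto_of_tendsto_of_tendsto_of_le_of_le' tendsto_const_nhds hdecay ?_ ?_
  · filter_upwards [eventually_ge_atTop 0] with t ht
    exact (mul_exp_mem_Ioc hu0 (by norm_num) ht).1.le.trans (lower t ht)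
  · filter_upwards [eventually_ge_atTop 0] with t ht using upper t ht
end

section
/- Let a > 4, let Q(X) = a·X²·(1 − X) − X, and let c₋ = 1/2 − √(1/4 − 1/a), c₊ = 1/2 + √(1/4 − 1/a). If u : [0, ∞) → ℝ is differentiable with u'(t) = Q(u(t)) for all t ≥ 0 and u(0) ∈ (c₋, 1), then u(t) → c₊ as t → ∞. -/
/-!
Factor `Q X = -a X (X - c₋) (X - c₊)`. Both `c₋` and `c₊` are equilibria and `Q` is locally
Lipschitz, so by uniqueness of solutions a trajectory can never reach, let alone cross, either of
them: starting in `(c₋, c₊]` it stays there, where `Q ≥ 0`, and starting above `c₊` it stays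
there, where `Q ≤ 0`. Either way `u` is monotone and bounded, hence converges, and the limit must
be a zero of `Q` lying in the closed interval between `u 0` and `c₊`, which forces it to be `c₊`.
-/

open Set Filter Topology

theorem exists_tendsto_of_monotoneOn_Ici {u : ℝ → ℝ} {a : ℝ} (hu : MonotoneOn u (Ici a))
    (hbdd : BddAbove (u '' Ici a)) : ∃ L, Tendsto u atTop (𝓝 L) := by
  rw [image_eq_range] at hbdd
  exact ⟨_, tendsto_comp_val_Ici_atTop.mp
    (tendsto_atTop_ciSup (fun x y h ↦ hu x.2 y.2 h) hbdd)⟩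

theorem exists_tendsto_of_antitoneOn_Ici {u : ℝ → ℝ} {a : ℝ} (hu : AntitoneOn u (Ici a))
    (hbdd : BddBelow (u '' Ici a)) : ∃ L, Tendsto u atTop (𝓝 L) := by
  rw [image_eq_range] at hbdd
  exact ⟨_, tendsto_comp_val_Ici_atTop.mp
    (tendsto_atTop_ciInf (fun x y h ↦ hu x.2 y.2 h) hbdd)⟩

section AutonomousODE

variable {f u : ℝ → ℝ}

theorem eq_of_hasDerivAt_of_apply_eq_zero {c t₀ t : ℝ} (hf : LocallyLipschitz f) (hc : f c = 0)
    (hu : ∀ t, 0 ≤ t → HasDerivAt u (f (u t)) t) (ht₀ : 0 ≤ t₀) (hut₀ : u t₀ = c)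
    (ht : t₀ ≤ t) : u t = c := by
  have hcont : ContinuousOn u (Icc t₀ t) := fun s hs ↦
    (hu s (ht₀.trans hs.1)).continuousAt.continuousWithinAt
  obtain ⟨K, hK⟩ := hf.locallyLipschitzOn.exists_lipschitzOnWith_of_compact
    ((isCompact_Icc.image_of_continuousOn hcont).insert c)
  refine ODE_solution_unique_of_mem_Icc_right (v := fun _ ↦ f) (g := fun _ ↦ c)
    (fun _ _ ↦ hK) hcont (fun s hs ↦ (hu s (ht₀.trans hs.1)).hasDerivWithinAt)
    (fun s hs ↦ mem_insert_of_mem _ (mem_image_of_mem _ (Ico_subset_Icc_self hs)))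
    continuousOn_const (fun s _ ↦ hc ▸ hasDerivWithinAt_const s _ c)
    (fun _ _ ↦ mem_insert _ _) hut₀ ⟨ht, le_rfl⟩

theorem le_of_hasDerivAt_of_apply_eq_zero {c t : ℝ} (hf : LocallyLipschitz f) (hc : f c = 0)
    (hu : ∀ t, 0 ≤ t → HasDerivAt u (f (u t)) t) (hu₀ : u 0 ≤ c) (ht : 0 ≤ t) : u t ≤ c := by
  by_contra! hlt
  obtain ⟨s, hs, hus⟩ := intermediate_value_Icc ht
    (fun s hs ↦ (hu s hs.1).continuousAt.continuousWithinAt) ⟨hu₀, hlt.le⟩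
  exact hlt.ne' (eq_of_hasDerivAt_of_apply_eq_zero hf hc hu hs.1 hus hs.2)

theorem ge_of_hasDerivAt_of_apply_eq_zero {c t : ℝ} (hf : LocallyLipschitz f) (hc : f c = 0)
    (hu : ∀ t, 0 ≤ t → HasDerivAt u (f (u t)) t) (hu₀ : c ≤ u 0) (ht : 0 ≤ t) : c ≤ u t := by
  by_contra! hlt
  obtain ⟨s, hs, hus⟩ := intermediate_value_Icc' ht
    (fun s hs ↦ (hu s hs.1).continuousAt.continuousWithinAt) ⟨hlt.le, hu₀⟩
  exact hlt.ne (eq_of_hasDerivAt_of_apply_eq_zero hf hc hu hs.1 hus hs.2)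

theorem monotoneOn_of_hasDerivAt_of_nonneg (hu : ∀ t, 0 ≤ t → HasDerivAt u (f (u t)) t)
    (hnonneg : ∀ t, 0 ≤ t → 0 ≤ f (u t)) : MonotoneOn u (Ici 0) :=
  monotoneOn_of_hasDerivWithinAt_nonneg (convex_Ici 0)
    (fun t ht ↦ (hu t ht).continuousAt.continuousWithinAt)
    (fun t ht ↦ (hu t (interior_subset ht)).hasDerivWithinAt)
    (fun t ht ↦ hnonneg t (interior_subset ht))

theorem antitoneOn_of_hasDerivAt_of_nonpos (hu : ∀ t, 0 ≤ t → HasDerivAt u (f (u t)) t)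
    (hnonpos : ∀ t, 0 ≤ t → f (u t) ≤ 0) : AntitoneOn u (Ici 0) :=
  antitoneOn_of_hasDerivWithinAt_nonpos (convex_Ici 0)
    (fun t ht ↦ (hu t ht).continuousAt.continuousWithinAt)
    (fun t ht ↦ (hu t (interior_subset ht)).hasDerivWithinAt)
    (fun t ht ↦ hnonpos t (interior_subset ht))

/-- By the mean value theorem `f (u ξₙ) = u (n + 1) - u n → 0` for some `ξₙ ∈ (n, n + 1)`. -/
theorem apply_eq_zero_of_hasDerivAt_of_tendsto {L : ℝ} (hf : Continuous f)
    (hu : ∀ t, 0 ≤ t → HasDerivAt u (f (u t)) t) (hL : Tendsto u atTop (𝓝 L)) : f L = 0 := by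
  have hslope (n : ℕ) : ∃ ξ ∈ Ioo (n : ℝ) (n + 1), f (u ξ) = u (n + 1) - u n := by
    obtain ⟨ξ, hξ, h⟩ := exists_hasDerivAt_eq_slope u (fun t ↦ f (u t)) (lt_add_one (n : ℝ))
      (fun t ht ↦ (hu t (n.cast_nonneg.trans ht.1)).continuousAt.continuousWithinAt)
      (fun t ht ↦ hu t (n.cast_nonneg.trans ht.1.le))
    exact ⟨ξ, hξ, by simpa using h⟩
  choose ξ hξ hfξ using hslope
  have hξ_top : Tendsto ξ atTop atTop :=
    tendsto_atTop_mono (fun n ↦ (hξ n).1.le) tendsto_natCast_atTop_atTop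
  have h_lim : Tendsto (fun n ↦ f (u (ξ n))) atTop (𝓝 (f L)) :=
    (hf.tendsto L).comp (hL.comp hξ_top)
  have h_zero : Tendsto (fun n ↦ f (u (ξ n))) atTop (𝓝 (L - L)) := by
    simp_rw [hfξ]
    exact (hL.comp (tendsto_atTop_add_const_right _ 1 tendsto_natCast_atTop_atTop)).sub
      (hL.comp tendsto_natCast_atTop_atTop)
  simpa using tendsto_nhds_unique h_lim h_zero

theorem tendsto_of_hasDerivAt_of_le {α c : ℝ} (hf : LocallyLipschitz f) (hα : f α = 0)
    (hc : f c = 0) (hpos : ∀ x ∈ Ioo α c, 0 < f x)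
    (hu : ∀ t, 0 ≤ t → HasDerivAt u (f (u t)) t) (hα₀ : α < u 0) (hc₀ : u 0 ≤ c) :
    Tendsto u atTop (𝓝 c) := by
  have hmem (t : ℝ) (ht : 0 ≤ t) : u t ∈ Icc α c :=
    ⟨ge_of_hasDerivAt_of_apply_eq_zero hf hα hu hα₀.le ht,
      le_of_hasDerivAt_of_apply_eq_zero hf hc hu hc₀ ht⟩
  have hnonneg : ∀ x ∈ Icc α c, 0 ≤ f x := by
    rintro x ⟨hαx, hxc⟩
    rcases hαx.eq_or_lt with rfl | hαx
    · exact hα.ge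
    rcases hxc.eq_or_lt with rfl | hxc
    · exact hc.ge
    exact (hpos x ⟨hαx, hxc⟩).le
  have hmono := monotoneOn_of_hasDerivAt_of_nonneg hu fun t ht ↦ hnonneg _ (hmem t ht)
  obtain ⟨L, hL⟩ := exists_tendsto_of_monotoneOn_Ici hmono
    ⟨c, forall_mem_image.2 fun t ht ↦ (hmem t ht).2⟩
  have hL_mem : L ∈ Icc (u 0) c := isClosed_Icc.mem_of_tendsto hL <|
    (eventually_ge_atTop 0).mono fun t ht ↦ ⟨hmono self_mem_Ici ht ht, (hmem t ht).2⟩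
  have hfL := apply_eq_zero_of_hasDerivAt_of_tendsto hf.continuous hu hL
  obtain rfl : L = c := hL_mem.2.eq_or_lt.resolve_right fun hLc ↦
    (hpos L ⟨hα₀.trans_le hL_mem.1, hLc⟩).ne' hfL
  exact hL

theorem tendsto_of_hasDerivAt_of_ge {c : ℝ} (hf : LocallyLipschitz f) (hc : f c = 0)
    (hneg : ∀ x, c < x → f x < 0) (hu : ∀ t, 0 ≤ t → HasDerivAt u (f (u t)) t)
    (hc₀ : c ≤ u 0) : Tendsto u atTop (𝓝 c) := by
  have hmem (t : ℝ) (ht : 0 ≤ t) : c ≤ u t := ge_of_hasDerivAt_of_apply_eq_zero hf hc hu hc₀ ht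
  have hnonpos : ∀ x, c ≤ x → f x ≤ 0 := by
    intro x hcx
    rcases hcx.eq_or_lt with rfl | hcx
    · exact hc.le
    exact (hneg x hcx).le
  have hanti := antitoneOn_of_hasDerivAt_of_nonpos hu fun t ht ↦ hnonpos _ (hmem t ht)
  obtain ⟨L, hL⟩ := exists_tendsto_of_antitoneOn_Ici hanti
    ⟨c, forall_mem_image.2 fun t ht ↦ hmem t ht⟩
  have hL_mem : L ∈ Icc c (u 0) := isClosed_Icc.mem_of_tendsto hL <|
    (eventually_ge_atTop 0).mono fun t ht ↦ ⟨hmem t ht, hanti self_mem_Ici ht ht⟩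
  have hfL := apply_eq_zero_of_hasDerivAt_of_tendsto hf.continuous hu hL
  obtain rfl : c = L := hL_mem.1.eq_or_lt.resolve_right fun hcL ↦ (hneg L hcL).ne hfL
  exact hL

theorem tendsto_of_hasDerivAt_of_basin {α c : ℝ} (hf : LocallyLipschitz f) (hα : f α = 0)
    (hc : f c = 0) (hpos : ∀ x ∈ Ioo α c, 0 < f x) (hneg : ∀ x, c < x → f x < 0)
    (hu : ∀ t, 0 ≤ t → HasDerivAt u (f (u t)) t) (hα₀ : α < u 0) : Tendsto u atTop (𝓝 c) := by
  rcases le_total (u 0) c with hc₀ | hc₀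
  · exact tendsto_of_hasDerivAt_of_le hf hα hc hpos hu hα₀ hc₀
  · exact tendsto_of_hasDerivAt_of_ge hf hc hneg hu hc₀

end AutonomousODE

theorem mul_sq_mul_one_sub_sub_eq {a r : ℝ} (ha : a ≠ 0) (hr : r ^ 2 = 1 / 4 - 1 / a) (X : ℝ) :
    a * X ^ 2 * (1 - X) - X = -a * X * (X - (1 / 2 - r)) * (X - (1 / 2 + r)) := by
  field_simp at hr
  linear_combination (-X / 4) * hr

theorem stmt_2 (a : ℝ) (ha : 4 < a)
    (Q : ℝ → ℝ) (hQ : ∀ X, Q X = a * X ^ 2 * (1 - X) - X)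
    (cm cp : ℝ) (hcm : cm = 1 / 2 - Real.sqrt (1 / 4 - 1 / a))
    (hcp : cp = 1 / 2 + Real.sqrt (1 / 4 - 1 / a))
    (u : ℝ → ℝ)
    (hderiv : ∀ t : ℝ, 0 ≤ t → HasDerivAt u (Q (u t)) t)
    (h0 : u 0 ∈ Set.Ioo cm 1) :
    Filter.Tendsto u Filter.atTop (nhds cp) := by
  set r := Real.sqrt (1 / 4 - 1 / a)
  have ha₀ : 0 < a := by linarith
  have h_disc : 0 < 1 / 4 - 1 / a := by
    rw [sub_pos]; exact one_div_lt_one_div_of_lt (by norm_num) ha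
  have hr_sq : r ^ 2 = 1 / 4 - 1 / a := Real.sq_sqrt h_disc.le
  have hr₀ : 0 < r := Real.sqrt_pos.2 h_disc
  have hr_half : r < 1 / 2 := by nlinarith [one_div_pos.2 ha₀]
  have hQ_eq (X : ℝ) : Q X = -a * X * (X - cm) * (X - cp) := by
    rw [hQ, hcm, hcp, mul_sq_mul_one_sub_sub_eq ha₀.ne' hr_sq]
  have hQ_lip : LocallyLipschitz Q := by
    rw [funext hQ]; exact ContDiff.locallyLipschitz (𝕂 := ℝ) (by fun_prop)
  refine tendsto_of_hasDerivAt_of_basin hQ_lip (by simp [hQ_eq]) (by simp [hQ_eq]) ?_ ?_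
    hderiv h0.1
  · rintro X ⟨hcmX, hXcp⟩
    rw [hQ_eq]
    have hX₀ : 0 < X := by linarith
    have := mul_pos (mul_pos (mul_pos ha₀ hX₀) (sub_pos.2 hcmX)) (sub_pos.2 hXcp)
    linarith
  · intro X hcpX
    rw [hQ_eq]
    have hX₀ : 0 < X := by linarith
    have := mul_pos (mul_pos (mul_pos ha₀ hX₀) (by linarith : 0 < X - cm)) (sub_pos.2 hcpX)
    linarith
end

section
/- Let b > 8. There exists N₀ such that for all real N ≥ N₀ and all real u, v with 0 < u < N/2 + 2√N and 0 < v < N/2 + 2√N, setting i = N/2 − 2√N + u and j = N/2 + 2√N − v, one has (b/(2N²))·(i²·(N − j) + j²·(N − i)) − (i + j) ≥ N·(1/4)·(b/8 − 1). -/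
set_option maxHeartbeats 1000000 in
theorem stmt_8 (b : ℝ) (hb : 8 < b) :
    ∃ N₀ : ℝ, ∀ N : ℝ, N₀ ≤ N → ∀ u v : ℝ,
      0 < u → u < N / 2 + 2 * Real.sqrt N →
      0 < v → v < N / 2 + 2 * Real.sqrt N →
      (b / (2 * N ^ 2)) *
          ((N / 2 - 2 * Real.sqrt N + u) ^ 2 * (N - (N / 2 + 2 * Real.sqrt N - v)) +
            (N / 2 + 2 * Real.sqrt N - v) ^ 2 * (N - (N / 2 - 2 * Real.sqrt N + u))) -
          ((N / 2 - 2 * Real.sqrt N + u) + (N / 2 + 2 * Real.sqrt N - v)) ≥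
        N * (1 / 4) * (b / 8 - 1) := by
  have hb8 : (0:ℝ) < b - 8 := by linarith
  refine ⟨max 1600 ((8 + 32*b/(b-8))^2), fun N hN u v hu hu' hv hv' => ?_⟩
  have hN1600 : (1600:ℝ) ≤ N := le_trans (le_max_left _ _) hN
  have hN0 : (0:ℝ) < N := by linarith
  set s := Real.sqrt N with hsdef
  have hs2 : s^2 = N := Real.sq_sqrt hN0.le
  have hs0 : (0:ℝ) < s := Real.sqrt_pos.2 hN0
  have hs40 : (40:ℝ) ≤ s := by
    have h40 : (40:ℝ) = Real.sqrt 1600 := by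
      rw [show (1600:ℝ) = 40^2 by norm_num, Real.sqrt_sq (by norm_num : (0:ℝ) ≤ 40)]
    rw [h40, hsdef]
    exact Real.sqrt_le_sqrt hN1600
  have hsb : 8 + 32*b/(b-8) ≤ s := by
    have hpos : (0:ℝ) ≤ 8 + 32*b/(b-8) := by
      have : (0:ℝ) < 32*b/(b-8) := by apply div_pos <;> linarith
      linarith
    calc 8 + 32*b/(b-8) = Real.sqrt ((8 + 32*b/(b-8))^2) := (Real.sqrt_sq hpos).symm
      _ ≤ Real.sqrt N := Real.sqrt_le_sqrt (le_trans (le_max_right _ _) hN)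
  set i := N / 2 - 2 * s + u with hidef
  set j := N / 2 + 2 * s - v with hjdef
  have h2s : 2*s ≤ N/20 := by nlinarith
  have hi1 : N/2 - 2*s < i := by rw [hidef]; linarith
  have hi2 : i < N := by rw [hidef]; linarith
  have hj1 : 0 < j := by rw [hjdef]; linarith
  have hj2 : j < N/2 + 2*s := by rw [hjdef]; linarith
  clear hsdef hidef hjdef
  clear_value s i j
  clear hu hv hu' hv'
  -- key lower bound
  have key : 8*(i^2*(N-j)+j^2*(N-i)) - 2*N^2*(i+j) ≥ -(16*s*N^2) := by
    have hid : 8*(i^2*(N-j)+j^2*(N-i)) - 2*N^2*(i+j)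
        = 4*N*(i-j)^2 - 8*(i-N/2)*(j-N/2)*(i+j) := by ring
    rw [hid]
    rcases le_or_gt (i - N/2) 0 with hp | hp <;> rcases le_or_gt (j - N/2) 0 with hq | hq
    · -- p ≤ 0, q ≤ 0 : |p| ≤ 2s, |q| ≤ N/2, i+j ≤ N
      nlinarith [sq_nonneg (i-j), mul_nonneg (neg_nonneg.2 hp) (neg_nonneg.2 hq),
        mul_nonneg (mul_nonneg (neg_nonneg.2 hp) (neg_nonneg.2 hq)) (by linarith : (0:ℝ) ≤ i+j),
        mul_nonneg hs0.le hN0.le, hj1.le, hi1.le]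
    · -- p ≤ 0, q > 0 : pq ≤ 0
      nlinarith [sq_nonneg (i-j), mul_nonneg (neg_nonneg.2 hp) hq.le,
        mul_nonneg (mul_nonneg (neg_nonneg.2 hp) hq.le) (by linarith : (0:ℝ) ≤ i+j),
        mul_nonneg hs0.le (sq_nonneg N)]
    · -- p > 0, q ≤ 0 : pq ≤ 0
      nlinarith [sq_nonneg (i-j), mul_nonneg hp.le (neg_nonneg.2 hq),
        mul_nonneg (mul_nonneg hp.le (neg_nonneg.2 hq)) (by linarith : (0:ℝ) ≤ i+j),
        mul_nonneg hs0.le (sq_nonneg N)]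
    · -- p > 0, q > 0 : p ≤ N/2, q ≤ 2s, i+j ≤ 2N
      have hA : (i-N/2)*(j-N/2) ≤ s*N := by
        nlinarith [mul_nonneg (by linarith : (0:ℝ) ≤ N - i) hq.le,
          mul_nonneg hN0.le (by linarith : (0:ℝ) ≤ 2*s - (j-N/2))]
      have hB : (i-N/2)*(j-N/2)*(i+j) ≤ s*N*(i+j) :=
        mul_le_mul_of_nonneg_right hA (by linarith)
      have hC : s*N*(i+j) ≤ s*N*(2*N) :=
        mul_le_mul_of_nonneg_left (by linarith) (by positivity)
      nlinarith [mul_nonneg hN0.le (sq_nonneg (i-j))]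
  have hN2 : (0:ℝ) < 2*N^2 := by positivity
  rw [ge_iff_le, ← sub_nonneg]
  have hrw : b / (2 * N ^ 2) * (i ^ 2 * (N - j) + j ^ 2 * (N - i)) - (i + j)
      - N * (1 / 4) * (b / 8 - 1)
      = (b*(i^2*(N-j)+j^2*(N-i)) - 2*N^2*(i+j) - N^3*(b-8)/16) / (2*N^2) := by
    field_simp
    ring
  rw [hrw]
  apply div_nonneg _ hN2.le
  have t1 : (0:ℝ) ≤ (b-8) * ((i+j) - (N/2 - 2*s)) :=
    mul_nonneg hb8.le (by linarith)
  have t2 : (0:ℝ) ≤ b * (8*(i^2*(N-j)+j^2*(N-i)) - 2*N^2*(i+j) + 16*s*N^2) :=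
    mul_nonneg (by linarith) (by linarith [key])
  have t3 : 8*(b-8) + 32*b ≤ (b-8)*s := by
    have h := mul_le_mul_of_nonneg_left hsb hb8.le
    have heq : (b-8)*(8 + 32*b/(b-8)) = 8*(b-8) + 32*b := by
      field_simp
    linarith [heq ▸ h]
  have t3' : (0:ℝ) ≤ ((b-8)*N - (8*(b-8)+32*b)*s) * N^2 := by
    apply mul_nonneg _ (sq_nonneg N)
    nlinarith [mul_le_mul_of_nonneg_right t3 hs0.le]
  nlinarith [t1, t2, t3', sq_nonneg N, mul_nonneg t1 (sq_nonneg N)]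
end

section
/- Let a > 4, let Q(X) = a·X²·(1 − X) − X, and set c₊ = 1/2 + √(1/4 − 1/a). There exists N₀ such that for all real N ≥ N₀ and all c ∈ [1, 4], one has N·Q(c₊ − c/√N) ≥ −(1/2)·√N·Q'(c₊) > 0. -/
set_option maxHeartbeats 1000000


theorem stmt_11 (a : ℝ) (ha : 4 < a)
    (Q : ℝ → ℝ) (hQ : ∀ X, Q X = a * X ^ 2 * (1 - X) - X)
    (cp : ℝ) (hcp : cp = 1 / 2 + Real.sqrt (1 / 4 - 1 / a)) :
    ∃ N₀ : ℝ, ∀ N : ℝ, N₀ ≤ N → ∀ c : ℝ, c ∈ Set.Icc (1 : ℝ) 4 →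
      N * Q (cp - c / Real.sqrt N) ≥ -(1 / 2) * Real.sqrt N * deriv Q cp ∧
        0 < -(1 / 2) * Real.sqrt N * deriv Q cp := by
  have ha0 : (0:ℝ) < a := by linarith
  have hnn : (0:ℝ) ≤ 1 / 4 - 1 / a := by
    rw [sub_nonneg, div_le_div_iff₀ ha0 (by norm_num)]
    linarith
  set s := Real.sqrt (1 / 4 - 1 / a) with hs
  have hs2 : s ^ 2 = 1 / 4 - 1 / a := Real.sq_sqrt hnn
  have hspos : 0 < s := Real.sqrt_pos.mpr (by
    rw [sub_pos, div_lt_div_iff₀ ha0 (by norm_num)]; linarith)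
  have hia : (0:ℝ) < 1 / a := by positivity
  have hsle : s ≤ 1 / 2 := by
    nlinarith [hs2, hspos, sq_nonneg (s - 1 / 2)]
  have hcph : 1 / 2 < cp := by rw [hcp]; linarith
  have hcp1 : cp ≤ 1 := by rw [hcp]; linarith
  -- root identity
  have hroot : a * (cp * (1 - cp)) = 1 := by
    have : cp * (1 - cp) = 1 / a := by
      rw [hcp]; nlinarith [hs2]
    rw [this]; field_simp
  set D : ℝ := a * cp ^ 2 - 1 with hD
  have hDpos : 0 < D := by nlinarith
  -- derivative of Q at cp
  have hQfun : Q = fun X => a * X ^ 2 * (1 - X) - X := funext hQ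
  have hderiv : deriv Q cp = -D := by
    have h1 : HasDerivAt (fun X : ℝ => X ^ 2) (2 * cp) cp := by
      simpa using hasDerivAt_pow 2 cp
    have h2 : HasDerivAt (fun X : ℝ => a * X ^ 2) (a * (2 * cp)) cp := h1.const_mul a
    have h3 : HasDerivAt (fun X : ℝ => 1 - X) (-1) cp := by
      simpa using (hasDerivAt_id cp).const_sub 1
    have h4 : HasDerivAt (fun X : ℝ => a * X ^ 2 * (1 - X))
        (a * (2 * cp) * (1 - cp) + a * cp ^ 2 * (-1)) cp := h2.mul h3
    have h5 : HasDerivAt Q (a * (2 * cp) * (1 - cp) + a * cp ^ 2 * (-1) - 1) cp := by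
      rw [hQfun]; exact h4.sub (hasDerivAt_id cp)
    rw [h5.deriv]
    nlinarith [hroot]
  refine ⟨((64 * a + 1) / D) ^ 2 + 1, fun N hN c hc => ?_⟩
  obtain ⟨hc1, hc4⟩ := hc
  have hKpos : 0 < (64 * a + 1) / D := by positivity
  have hNpos : 0 < N := by nlinarith
  set r := Real.sqrt N with hr
  have hrpos : 0 < r := Real.sqrt_pos.mpr hNpos
  have hr2 : r ^ 2 = N := Real.sq_sqrt hNpos.le
  have hrK : (64 * a + 1) / D ≤ r := by
    nlinarith [hr2, hKpos, hrpos]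
  have hrD : 64 * a + 1 ≤ r * D := by
    have := (div_le_iff₀ hDpos).mp hrK
    linarith
  have hr1 : 1 ≤ r := by
    have : (64 * a + 1) / D ≤ r := hrK
    calc (1:ℝ) ≤ r * D / D := by
          rw [le_div_iff₀ hDpos]; nlinarith
      _ = r := by field_simp
  -- the key cubic inequality, multiplied by r
  set u : ℝ := r * cp - c with hu
  have hux : r * (cp - c / r) = u := by
    field_simp [hu]
    ring
  have key : a * u ^ 2 * (r - u) - r ^ 2 * u
      = r ^ 2 * c * D + r * a * c ^ 2 * (1 - 3 * cp) + a * c ^ 3 := by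
    simp only [hu, hD]
    linear_combination (r ^ 3 * cp - 2 * r ^ 2 * c) * hroot
  have ineq : (1 / 2) * r ^ 2 * D ≤ a * u ^ 2 * (r - u) - r ^ 2 * u := by
    rw [key]
    have hB : r * (a * c ^ 2 * (3 * cp - 1)) ≤ r * (32 * a) := by
      have hc2 : c ^ 2 ≤ 16 := by nlinarith
      have hac : a * c ^ 2 ≤ a * 16 := by nlinarith
      have h1 : a * c ^ 2 * (3 * cp - 1) ≤ 32 * a := by
        nlinarith [mul_nonneg (by linarith : (0:ℝ) ≤ 3 - 3 * cp)
          (mul_nonneg ha0.le (sq_nonneg c))]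
      exact mul_le_mul_of_nonneg_left h1 hrpos.le
    have hC : 32 * a * r + r / 2 ≤ (1 / 2) * r ^ 2 * D := by
      have h2 : r * (64 * a + 1) ≤ r * (r * D) :=
        mul_le_mul_of_nonneg_left hrD hrpos.le
      nlinarith
    have hA : r ^ 2 * D ≤ r ^ 2 * c * D := by
      nlinarith [mul_nonneg (sq_nonneg r) hDpos.le]
    have hDc : (0:ℝ) ≤ a * c ^ 3 := by positivity
    nlinarith [hA, hB, hC, hDc]
  -- relate to N * Q(...)
  have hQx : N * Q (cp - c / r) = (a * u ^ 2 * (r - u) - r ^ 2 * u) / r := by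
    rw [hQ]
    have h1 : a * u ^ 2 * (r - u) - r ^ 2 * u
        = r ^ 3 * (a * (cp - c / r) ^ 2 * (1 - (cp - c / r)) - (cp - c / r)) := by
      have h2 : u = r * (cp - c / r) := hux.symm
      rw [h2]; ring
    rw [h1, ← hr2]
    field_simp
  have hgoal2 : 0 < -(1 / 2) * r * deriv Q cp := by
    rw [hderiv]; nlinarith [mul_pos hrpos hDpos]
  refine ⟨?_, hgoal2⟩
  rw [hQx, hderiv, ge_iff_le, le_div_iff₀ hrpos]
  nlinarith [ineq, hrpos]
end

section
/- Let a > 4, let Q(X) = a·X²·(1 − X) − X, and set c₋ = 1/2 − √(1/4 − 1/a) and c₊ = 1/2 + √(1/4 − 1/a). There exists N₀ such that for all real N ≥ N₀ and all real x with c₋ + 2/√N ≤ x ≤ c₊ − 2/√N, one has N·Q(x) ≥ √N·min(Q'(c₋), −Q'(c₊)) > 0. -/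
theorem stmt_13 (a : ℝ) (ha : 4 < a)
    (Q : ℝ → ℝ) (hQ : ∀ X, Q X = a * X ^ 2 * (1 - X) - X)
    (cm cp : ℝ) (hcm : cm = 1 / 2 - Real.sqrt (1 / 4 - 1 / a))
    (hcp : cp = 1 / 2 + Real.sqrt (1 / 4 - 1 / a)) :
    ∃ N₀ : ℝ, ∀ N : ℝ, N₀ ≤ N → ∀ x : ℝ,
      cm + 2 / Real.sqrt N ≤ x → x ≤ cp - 2 / Real.sqrt N →
      N * Q x ≥ Real.sqrt N * min (deriv Q cm) (-deriv Q cp) ∧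
        0 < Real.sqrt N * min (deriv Q cm) (-deriv Q cp) := by
  have ha0 : (0:ℝ) < a := by linarith
  have hq : (0:ℝ) < 1 / 4 - 1 / a := by
    rw [sub_pos, div_lt_div_iff₀ ha0 (by norm_num)]
    linarith
  set s := Real.sqrt (1 / 4 - 1 / a) with hs
  have hs_pos : 0 < s := Real.sqrt_pos.mpr hq
  have hs2 : s ^ 2 = 1 / 4 - 1 / a := Real.sq_sqrt hq.le
  have has2 : a * s ^ 2 = a / 4 - 1 := by
    rw [hs2]; field_simp
  have hs_half : s < 1 / 2 := by
    have h14 : (0:ℝ) < 1 / a := one_div_pos.mpr ha0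
    have : s < Real.sqrt (1 / 4) := Real.sqrt_lt_sqrt hq.le (by linarith)
    have h4 : Real.sqrt (1 / 4) = 1 / 2 := by
      rw [show (1:ℝ)/4 = (1/2)^2 by norm_num, Real.sqrt_sq (by norm_num)]
    linarith [h4 ▸ this]
  have hcm_pos : 0 < cm := by rw [hcm]; linarith
  have hd_pos : 0 < cp - cm := by rw [hcm, hcp]; linarith
  have hQf : Q = fun X => a * X ^ 2 * (1 - X) - X := funext hQ
  have hder : ∀ c : ℝ, deriv Q c = 2 * a * c - 3 * a * c ^ 2 - 1 := by
    intro c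
    have h : HasDerivAt (fun X : ℝ => a * X ^ 2 * (1 - X) - X)
        ((a * (2 * c ^ 1)) * (1 - c) + (a * c ^ 2) * (-1) - 1) c :=
      (((hasDerivAt_pow 2 c).const_mul a).mul ((hasDerivAt_id c).const_sub 1)).sub
        (hasDerivAt_id c)
    rw [hQf]
    rw [h.deriv]
    ring
  have dcm : deriv Q cm = 2 * a * s * (1 / 2 - s) := by
    rw [hder, hcm]
    linear_combination (-1 : ℝ) * has2
  have dcp : -deriv Q cp = 2 * a * s * (1 / 2 + s) := by
    rw [hder, hcp]
    linear_combination (1 : ℝ) * has2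
  have hmin : min (deriv Q cm) (-deriv Q cp) = 2 * a * s * (1 / 2 - s) := by
    rw [dcm, dcp]
    apply min_eq_left
    nlinarith
  refine ⟨1, fun N hN x hx1 hx2 => ?_⟩
  set r := Real.sqrt N with hr
  have hr1 : 1 ≤ r := by
    have h := Real.sqrt_le_sqrt hN
    rwa [Real.sqrt_one] at h
  have hr0 : 0 < r := lt_of_lt_of_le one_pos hr1
  have hrN : r ^ 2 = N := Real.sq_sqrt (by linarith)
  have h1 : 2 ≤ r * (x - cm) := by
    have h := (div_le_iff₀ hr0).mp (show 2 / r ≤ x - cm by linarith)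
    linarith [h]
  have h2 : 2 ≤ r * (cp - x) := by
    have h := (div_le_iff₀ hr0).mp (show 2 / r ≤ cp - x by linarith)
    linarith [h]
  have hu : (0:ℝ) ≤ x - cm := by nlinarith
  have hv : (0:ℝ) ≤ cp - x := by nlinarith
  have key : cp - cm ≤ r * ((x - cm) * (cp - x)) := by
    have e1 := mul_le_mul_of_nonneg_right h1 hv
    have e2 := mul_le_mul_of_nonneg_right h2 hu
    ring_nf at e1 e2 ⊢
    linarith
  have hQx : Q x = a * x * ((x - cm) * (cp - x)) := by
    rw [hQ, hcm, hcp]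
    linear_combination (-x : ℝ) * has2
  have hxcm : cm ≤ x := by linarith [hu]
  have hdd : cp - cm = 2 * s := by rw [hcm, hcp]; ring
  constructor
  · have p1 : 0 ≤ r * ((x - cm) * (cp - x)) := le_trans hd_pos.le key
    have main : a * cm * (cp - cm) ≤ a * x * (r * ((x - cm) * (cp - x))) := by
      have m1 : a * cm * (cp - cm) ≤ a * cm * (r * ((x - cm) * (cp - x))) :=
        mul_le_mul_of_nonneg_left key (mul_nonneg ha0.le hcm_pos.le)
      have m2 : a * cm * (r * ((x - cm) * (cp - x))) ≤ a * x * (r * ((x - cm) * (cp - x))) :=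
        mul_le_mul_of_nonneg_right (mul_le_mul_of_nonneg_left hxcm ha0.le) p1
      linarith
    show Real.sqrt N * min (deriv Q cm) (-deriv Q cp) ≤ N * Q x
    calc Real.sqrt N * min (deriv Q cm) (-deriv Q cp)
        = r * (a * cm * (cp - cm)) := by rw [hmin, hdd, hcm]; ring
      _ ≤ r * (a * x * (r * ((x - cm) * (cp - x)))) := by
          exact mul_le_mul_of_nonneg_left main hr0.le
      _ = N * Q x := by rw [hQx, ← hrN]; ring
  · rw [hmin]
    have hm : 0 < 2 * a * s * (1 / 2 - s) :=
      mul_pos (mul_pos (mul_pos (by norm_num : (0:ℝ) < 2) ha0) hs_pos) (by linarith)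
    exact mul_pos hr0 hm
end
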